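/- Let n ≥ 3 be an integer, q > 1 and a > 0, and let ψ ∈ 𝒜 satisfy ψ(r) ∼ a r^q as r → +∞. Set p_q := 2(n−1)(q−1)/((n−1)q−1) (so 0 < p_q < 2). Then ∫₁^∞ ψ(t)^{−(n−1)} dt < ∞, and the change of variables s = s(r) defined by 1/((n−2)s^{n−2}) = ∫_r^∞ ψ(t)^{−(n−1)} dt, with inverse r = r(s), and the weight ρ(s) := ψ(r(s))^{2(n−1)}/s^{2(n−1)} satisfy: r(s) ∼ c s^{(2−p_q)/2} as s → +∞, where c := a^{−(n−1)/((n−1)q−1)} · [(n−2)/((n−1)q−1)]^{1/((n−1)q−1)}, and ρ(s) ∼ c₁ s^{−p_q} as s → +∞, where c₁ := a^{2(n−1)} c^{2(n−1)q}. -/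

import Mathlib

/-- The class `𝒜` of model functions: `ψ ∈ C^∞((0,∞)) ∩ C¹([0,∞))` with `ψ(0) = 0`,
`ψ'(0) = 1` (one-sided derivative) and `ψ > 0` on `(0,∞)`. -/
def classA (ψ : ℝ → ℝ) : Prop :=
  ContDiffOn ℝ (⊤ : ℕ∞) ψ (Set.Ioi 0) ∧ ContDiffOn ℝ 1 ψ (Set.Ici 0) ∧
  ψ 0 = 0 ∧ derivWithin ψ (Set.Ici 0) 0 = 1 ∧ ∀ r > (0 : ℝ), 0 < ψ r

/-- The change of variables `s = s(r)` determined by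
`1/((n-2) s^{n-2}) = ∫_r^∞ ψ(t)^{-(n-1)} dt`. -/
noncomputable def Svar (n : ℕ) (ψ : ℝ → ℝ) (r : ℝ) : ℝ :=
  (((n : ℝ) - 2) * ∫ t in Set.Ioi r, 1 / ψ t ^ (n - 1)) ^ (-(1 / ((n : ℝ) - 2)))

section Stmt12Aux
open Real Filter MeasureTheory Set
set_option maxHeartbeats 1000000

namespace Stmt12

structure Hyp (n : ℕ) (ψ : ℝ → ℝ) (q a : ℝ) : Prop where
  hn : 3 ≤ n
  hq : 1 < q
  ha : 0 < a
  hpos : ∀ r > (0:ℝ), 0 < ψ r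
  hcont : ContinuousOn ψ (Set.Ioi 0)
  hasymp : Tendsto (fun r => ψ r / (a * r ^ q)) atTop (nhds 1)
  hC1 : ContDiffOn ℝ 1 ψ (Set.Ici 0)
  h0 : ψ 0 = 0
  hder : derivWithin ψ (Set.Ici 0) 0 = 1

variable {n : ℕ} {ψ : ℝ → ℝ} {q a : ℝ}

noncomputable def g (n : ℕ) (ψ : ℝ → ℝ) : ℝ → ℝ := fun t => 1 / ψ t ^ (n - 1)

noncomputable def F (n : ℕ) (ψ : ℝ → ℝ) (r : ℝ) : ℝ := ∫ t in Set.Ioi r, g n ψ t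

lemma k_ge (H : Hyp n ψ q a) : (2:ℝ) ≤ ((n:ℝ) - 1) := by
  have : (3:ℝ) ≤ (n:ℝ) := by exact_mod_cast H.hn
  linarith

lemma k_cast (H : Hyp n ψ q a) : ((n - 1 : ℕ) : ℝ) = (n:ℝ) - 1 := by
  have : 1 ≤ n := le_trans (by norm_num) H.hn
  push_cast [this]; ring

lemma g_pos (H : Hyp n ψ q a) {t : ℝ} (ht : 0 < t) : 0 < g n ψ t := by
  have := H.hpos t ht
  simp only [g]
  positivity

lemma g_contOn (H : Hyp n ψ q a) : ContinuousOn (g n ψ) (Set.Ioi 0) := by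
  apply ContinuousOn.div continuousOn_const (H.hcont.pow _)
  intro t ht
  exact pow_ne_zero _ (H.hpos t ht).ne'

lemma qk_gt_one (H : Hyp n ψ q a) : 1 < q * ((n:ℝ) - 1) := by
  have h1 := k_ge H; have h2 := H.hq; nlinarith

/-- eventual lower bound for ψ -/
lemma psi_lb (H : Hyp n ψ q a) : ∀ᶠ t in atTop, a / 2 * t ^ q ≤ ψ t := by
  have h := H.hasymp.eventually (eventually_ge_nhds (by norm_num : (1:ℝ)/2 < 1))
  filter_upwards [h, eventually_gt_atTop 0] with t ht ht0
  have ha := H.ha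
  have hb : 0 < a * t ^ q := by positivity
  rw [le_div_iff₀ hb] at ht
  nlinarith

lemma g_int (H : Hyp n ψ q a) {r : ℝ} (hr : 0 < r) : IntegrableOn (g n ψ) (Set.Ioi r) := by
  have ha := H.ha
  obtain ⟨R, hR⟩ := ((psi_lb H).and (eventually_ge_atTop (max r 1))).exists_forall_of_atTop
  have hR1 : max r 1 ≤ R := (hR R le_rfl).2
  have hRpos : 0 < R := lt_of_lt_of_le (by positivity) (le_trans (le_max_right _ _) hR1)
  have hint2 : IntegrableOn (g n ψ) (Set.Ioi R) := by
    have hmeas : AEStronglyMeasurable (g n ψ) (volume.restrict (Set.Ioi R)) := by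
      apply ContinuousOn.aestronglyMeasurable _ measurableSet_Ioi
      exact (g_contOn H).mono (fun t ht => lt_trans hRpos ht)
    have hqk : -(q * ((n:ℝ) - 1)) < -1 := by
      have := qk_gt_one H; linarith
    have hbint : Integrable (fun t => ((a/2) ^ (n-1))⁻¹ * t ^ (-(q * ((n:ℝ)-1))))
        (volume.restrict (Set.Ioi R)) := by
      exact ((integrableOn_Ioi_rpow_iff hRpos).2 hqk).const_mul _
    apply Integrable.mono' hbint hmeas
    filter_upwards [ae_restrict_mem measurableSet_Ioi] with t ht
    have ht0 : 0 < t := lt_trans hRpos ht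
    have hψ : a / 2 * t ^ q ≤ ψ t := (hR t ht.le).1
    have hlb : 0 < a / 2 * t ^ q := by positivity
    have hψpos := H.hpos t ht0
    have h1 : (a / 2 * t ^ q) ^ (n-1) ≤ ψ t ^ (n-1) :=
      pow_le_pow_left₀ hlb.le hψ _
    have h2 : g n ψ t ≤ 1 / (a / 2 * t ^ q) ^ (n-1) := by
      apply div_le_div_of_nonneg_left one_pos.le (by positivity) h1
    have h3 : (1:ℝ) / (a / 2 * t ^ q) ^ (n-1)
        = ((a/2) ^ (n-1))⁻¹ * t ^ (-(q * ((n:ℝ)-1))) := by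
      rw [mul_pow, one_div, mul_inv]
      congr 1
      rw [← Real.rpow_natCast (t ^ q) (n-1), ← Real.rpow_mul ht0.le,
        ← Real.rpow_neg ht0.le]
      rw [k_cast H]
    have hg0 : 0 ≤ g n ψ t := (g_pos H ht0).le
    rw [Real.norm_of_nonneg hg0]
    calc g n ψ t ≤ 1 / (a / 2 * t ^ q) ^ (n-1) := h2
      _ = _ := h3
  have hint1 : IntegrableOn (g n ψ) (Set.Ioc r R) := by
    apply ((g_contOn H).mono _).integrableOn_compact (isCompact_Icc (a := r) (b := R)) |>.mono_set Set.Ioc_subset_Icc_self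
    intro t ht
    exact lt_of_lt_of_le hr ht.1
  have : Set.Ioi r = Set.Ioc r R ∪ Set.Ioi R :=
    (Set.Ioc_union_Ioi_eq_Ioi (le_trans (le_max_left r 1) hR1)).symm
  rw [this]
  exact hint1.union hint2


lemma g_int_Ioc (H : Hyp n ψ q a) {u v : ℝ} (hu : 0 < u) :
    IntegrableOn (g n ψ) (Set.Ioc u v) := by
  rcases le_or_gt u v with h | h
  · apply ((g_contOn H).mono _).integrableOn_compact (isCompact_Icc (a := u) (b := v))
      |>.mono_set Set.Ioc_subset_Icc_self
    intro t ht; exact lt_of_lt_of_le hu ht.1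
  · simp [Set.Ioc_eq_empty (not_lt.2 h.le)]

lemma F_decomp (H : Hyp n ψ q a) {u v : ℝ} (hu : 0 < u) (huv : u ≤ v) :
    F n ψ u = (∫ t in Set.Ioc u v, g n ψ t) + F n ψ v := by
  have hv : 0 < v := lt_of_lt_of_le hu huv
  rw [F, ← Set.Ioc_union_Ioi_eq_Ioi huv,
    setIntegral_union (Set.Ioc_disjoint_Ioi le_rfl) measurableSet_Ioi
      (g_int_Ioc H hu) (g_int H hv)]
  rfl

lemma intIoc_pos (H : Hyp n ψ q a) {u v : ℝ} (hu : 0 < u) (huv : u < v) :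
    0 < ∫ t in Set.Ioc u v, g n ψ t := by
  rw [← intervalIntegral.integral_of_le huv.le]
  apply intervalIntegral.intervalIntegral_pos_of_pos_on
  · exact (intervalIntegrable_iff_integrableOn_Ioc_of_le huv.le).2 (g_int_Ioc H hu)
  · intro x hx; exact g_pos H (lt_trans hu hx.1)
  · exact huv

lemma F_pos (H : Hyp n ψ q a) {r : ℝ} (hr : 0 < r) : 0 < F n ψ r := by
  rw [F_decomp H hr (by linarith : r ≤ r + 1)]
  have h1 : 0 < ∫ t in Set.Ioc r (r+1), g n ψ t := intIoc_pos H hr (by linarith)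
  have h2 : 0 ≤ F n ψ (r+1) := by
    apply setIntegral_nonneg measurableSet_Ioi
    intro t ht; exact (g_pos H (by linarith [Set.mem_Ioi.1 ht])).le
  linarith

lemma F_strictAnti (H : Hyp n ψ q a) : StrictAntiOn (F n ψ) (Set.Ioi 0) := by
  intro u hu v hv huv
  rw [F_decomp H hu huv.le]
  have := intIoc_pos H hu huv
  linarith

lemma F_eq (H : Hyp n ψ q a) {x : ℝ} (hx : 0 < x) :
    F n ψ x = F n ψ 1 - ∫ t in (1:ℝ)..x, g n ψ t := by
  rcases le_or_gt 1 x with h | h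
  · have := F_decomp H one_pos h
    rw [intervalIntegral.integral_of_le h]
    linarith
  · have := F_decomp H hx h.le
    rw [intervalIntegral.integral_symm, intervalIntegral.integral_of_le h.le]
    linarith

lemma F_hasDeriv (H : Hyp n ψ q a) {r : ℝ} (hr : 0 < r) :
    HasDerivAt (F n ψ) (-(g n ψ r)) r := by
  have hmem : Set.Ioi (0:ℝ) ∈ nhds r := isOpen_Ioi.mem_nhds hr
  have hca : ContinuousAt (g n ψ) r := (g_contOn H).continuousAt hmem
  have hii : IntervalIntegrable (g n ψ) volume 1 r := by
    apply ContinuousOn.intervalIntegrable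
    apply (g_contOn H).mono
    intro t ht
    rcases Set.mem_uIcc.1 ht with ⟨h1, _⟩ | ⟨h1, _⟩
    · exact lt_of_lt_of_le one_pos h1
    · exact lt_of_lt_of_le hr h1
  have hsm : StronglyMeasurableAtFilter (g n ψ) (nhds r) volume :=
    ⟨Set.Ioi 0, hmem, (g_contOn H).aestronglyMeasurable measurableSet_Ioi⟩
  have hD := (intervalIntegral.integral_hasDerivAt_right hii hsm hca).const_sub (F n ψ 1)
  apply hD.congr_of_eventuallyEq
  filter_upwards [hmem] with x hx
  exact F_eq H hx

lemma F_tendsto_zero (H : Hyp n ψ q a) : Tendsto (F n ψ) atTop (nhds 0) := by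
  have h1 : Tendsto (fun x => ∫ t in (1:ℝ)..x, g n ψ t) atTop (nhds (F n ψ 1)) :=
    intervalIntegral_tendsto_integral_Ioi 1 (g_int H one_pos) tendsto_id
  have h2 : Tendsto (fun x => F n ψ 1 - ∫ t in (1:ℝ)..x, g n ψ t) atTop (nhds 0) := by
    have := (tendsto_const_nhds (x := F n ψ 1) (f := atTop)).sub h1
    simpa using this
  apply h2.congr'
  filter_upwards [eventually_gt_atTop 0] with x hx
  exact (F_eq H hx).symm

lemma psi_lin (H : Hyp n ψ q a) : ∃ δ > 0, ∀ t ∈ Set.Ioo (0:ℝ) δ, ψ t ≤ 2 * t := by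
  have hdiff : DifferentiableWithinAt ℝ ψ (Set.Ici 0) 0 :=
    (H.hC1.differentiableOn one_ne_zero) 0 (Set.mem_Ici.2 le_rfl)
  have hd : HasDerivWithinAt ψ 1 (Set.Ici 0) 0 := by
    have := hdiff.hasDerivWithinAt
    rwa [H.hder] at this
  have hslope := hasDerivWithinAt_iff_tendsto_slope.1 hd
  have hset : Set.Ici (0:ℝ) \ {0} = Set.Ioi 0 := by
    ext x
    simp only [Set.mem_diff, Set.mem_Ici, Set.mem_singleton_iff, Set.mem_Ioi]
    constructor
    · rintro ⟨h1, h2⟩; exact lt_of_le_of_ne h1 (Ne.symm h2)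
    · intro h; exact ⟨h.le, h.ne'⟩
  rw [hset] at hslope
  have h2 : ∀ᶠ t in nhdsWithin 0 (Set.Ioi 0), slope ψ 0 t ≤ 2 :=
    hslope.eventually (eventually_le_nhds (by norm_num))
  obtain ⟨u, hu, hsub⟩ := mem_nhdsGT_iff_exists_Ioo_subset.1 h2
  refine ⟨u, hu, fun t ht => ?_⟩
  have hst : slope ψ 0 t ≤ 2 := hsub ht
  have ht0 : 0 < t := ht.1
  rw [slope_def_field, H.h0, sub_zero, sub_zero, div_le_iff₀ ht0] at hst
  linarith

lemma F_unbounded (H : Hyp n ψ q a) (M : ℝ) : ∃ r > 0, M ≤ F n ψ r := by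
  obtain ⟨δ, hδ, hlin⟩ := psi_lin H
  set d := δ / 2 with hd_def
  have hd : 0 < d := by positivity
  set cδ : ℝ := (2 ^ (n-1) * d ^ (n-2))⁻¹ with hcδ_def
  have hcδ : 0 < cδ := by positivity
  set r : ℝ := min (d/2) (d * Real.exp (-(M / cδ))) with hr_def
  have hr0 : 0 < r := lt_min (by positivity) (by positivity)
  have hrd : r < d := lt_of_le_of_lt (min_le_left _ _) (by linarith)
  refine ⟨r, hr0, ?_⟩
  -- pointwise bound on Ioc r d
  have hpt : ∀ t ∈ Set.Ioc r d, cδ * t⁻¹ ≤ g n ψ t := by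
    intro t ht
    have ht0 : 0 < t := lt_trans hr0 ht.1
    have htδ : t < δ := lt_of_le_of_lt ht.2 (by rw [hd_def]; linarith)
    have hψt : ψ t ≤ 2 * t := hlin t ⟨ht0, htδ⟩
    have hψ0 : 0 < ψ t := H.hpos t ht0
    have hn := H.hn
    have hb : ψ t ^ (n-1) ≤ 2 ^ (n-1) * d ^ (n-2) * t := by
      calc ψ t ^ (n-1) ≤ (2*t) ^ (n-1) := pow_le_pow_left₀ hψ0.le hψt _
        _ = 2 ^ (n-1) * (t ^ (n-2) * t) := by
            have hh : n - 1 = (n-2) + 1 := by omega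
            rw [mul_pow, hh, pow_succ]; ring
        _ ≤ 2 ^ (n-1) * (d ^ (n-2) * t) := by
            have h1 : t ^ (n-2) ≤ d ^ (n-2) := pow_le_pow_left₀ ht0.le ht.2 _
            have h2 : (0:ℝ) ≤ 2 ^ (n-1) := by positivity
            exact mul_le_mul_of_nonneg_left
              (mul_le_mul_of_nonneg_right h1 ht0.le) h2
        _ = 2 ^ (n-1) * d ^ (n-2) * t := by ring
    have hle := one_div_le_one_div_of_le (pow_pos hψ0 (n-1)) hb
    have heq : cδ * t⁻¹ = 1 / (2 ^ (n-1) * d ^ (n-2) * t) := by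
      rw [hcδ_def]; field_simp
    rw [heq]
    exact hle
  have hint1 : IntegrableOn (fun t => cδ * t⁻¹) (Set.Ioc r d) := by
    apply (ContinuousOn.integrableOn_compact (isCompact_Icc (a := r) (b := d)) _).mono_set
      Set.Ioc_subset_Icc_self
    apply ContinuousOn.mul continuousOn_const (ContinuousOn.inv₀ continuousOn_id _)
    intro t ht
    exact ne_of_gt (lt_of_lt_of_le hr0 ht.1)
  have hmono := setIntegral_mono_on hint1 (g_int_Ioc H hr0) measurableSet_Ioc hpt
  have hIval : (∫ t in Set.Ioc r d, cδ * t⁻¹) = cδ * Real.log (d / r) := by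
    rw [← intervalIntegral.integral_of_le hrd.le, intervalIntegral.integral_const_mul,
      integral_inv_of_pos hr0 hd]
  have hlog : M / cδ ≤ Real.log (d / r) := by
    rw [Real.le_log_iff_exp_le (by positivity)]
    have h1 : r ≤ d * Real.exp (-(M / cδ)) := min_le_right _ _
    rw [le_div_iff₀ hr0]
    calc Real.exp (M/cδ) * r ≤ Real.exp (M/cδ) * (d * Real.exp (-(M/cδ))) :=
          mul_le_mul_of_nonneg_left h1 (Real.exp_nonneg _)
      _ = d := by rw [mul_comm, mul_assoc, ← Real.exp_add]; simp
  have hM : M ≤ cδ * Real.log (d / r) := by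
    rw [div_le_iff₀ hcδ] at hlog
    linarith
  have hFd : 0 < F n ψ d := F_pos H hd
  rw [F_decomp H hr0 hrd.le]
  rw [hIval] at hmono
  linarith

lemma F_tendsto_top (H : Hyp n ψ q a) :
    Tendsto (F n ψ) (nhdsWithin 0 (Set.Ioi 0)) atTop := by
  rw [tendsto_atTop]
  intro b
  obtain ⟨r0, hr0, hbF⟩ := F_unbounded H b
  have hmem : Set.Ioc 0 r0 ∈ nhdsWithin (0:ℝ) (Set.Ioi 0) :=
    Ioc_mem_nhdsGT_of_mem ⟨le_rfl, hr0⟩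
  filter_upwards [hmem] with r hr
  rcases eq_or_lt_of_le hr.2 with h | h
  · rw [h]; exact hbF
  · exact hbF.trans (F_strictAnti H (Set.mem_Ioi.2 hr.1) (Set.mem_Ioi.2 hr0) h).le

lemma N2_pos (H : Hyp n ψ q a) : 0 < (n:ℝ) - 2 := by
  have : (3:ℝ) ≤ (n:ℝ) := by exact_mod_cast H.hn
  linarith

lemma Svar_eq (r : ℝ) : Svar n ψ r = (((n:ℝ) - 2) * F n ψ r) ^ (-(1 / ((n:ℝ) - 2))) := rfl

lemma Svar_pos (H : Hyp n ψ q a) {r : ℝ} (hr : 0 < r) : 0 < Svar n ψ r := by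
  rw [Svar_eq]
  have h1 := F_pos H hr
  have h2 := N2_pos H
  exact Real.rpow_pos_of_pos (by positivity) _

lemma exp_neg' (H : Hyp n ψ q a) : -(1 / ((n:ℝ) - 2)) < 0 := by
  have := N2_pos H
  have : 0 < 1 / ((n:ℝ) - 2) := by positivity
  linarith

lemma Svar_strictMono (H : Hyp n ψ q a) : StrictMonoOn (Svar n ψ) (Set.Ioi 0) := by
  intro u hu v hv huv
  rw [Svar_eq, Svar_eq]
  have hFv := F_pos H (Set.mem_Ioi.1 hv)
  have hN2 := N2_pos H
  have hFF := F_strictAnti H hu hv huv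
  exact Real.rpow_lt_rpow_of_neg (by positivity)
    (mul_lt_mul_of_pos_left hFF hN2) (exp_neg' H)

lemma F_contOn (H : Hyp n ψ q a) : ContinuousOn (F n ψ) (Set.Ioi 0) :=
  fun r hr => ((F_hasDeriv H hr).continuousAt).continuousWithinAt

lemma Svar_surj (H : Hyp n ψ q a) {s : ℝ} (hs : 0 < s) : ∃ r > 0, Svar n ψ r = s := by
  have hN2 := N2_pos H
  set y : ℝ := s ^ (-((n:ℝ) - 2)) / ((n:ℝ) - 2) with hy_def
  have hy : 0 < y := div_pos (Real.rpow_pos_of_pos hs _) hN2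
  obtain ⟨r2, hr2pos, hr2⟩ : ∃ r2 > 0, F n ψ r2 < y := by
    obtain ⟨x, hx⟩ := (((F_tendsto_zero H).eventually (eventually_lt_nhds hy)).and
      (eventually_gt_atTop 0)).exists
    exact ⟨x, hx.2, hx.1⟩
  obtain ⟨r1, hr1, hyF⟩ : ∃ r1 ∈ Set.Ioo 0 r2, y ≤ F n ψ r1 := by
    have h1 := (F_tendsto_top H).eventually_ge_atTop y
    have h2 : Set.Ioo 0 r2 ∈ nhdsWithin (0:ℝ) (Set.Ioi 0) :=
      Ioo_mem_nhdsGT_of_mem ⟨le_rfl, hr2pos⟩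
    obtain ⟨x, hx1, hx2⟩ := (h1.and h2).exists
    exact ⟨x, hx2, hx1⟩
  have hIVT := intermediate_value_Icc' hr1.2.le
    ((F_contOn H).mono (fun t ht => lt_of_lt_of_le hr1.1 ht.1))
  obtain ⟨r, hrIcc, hFr⟩ := hIVT ⟨hr2.le, hyF⟩
  have hr0 : 0 < r := lt_of_lt_of_le hr1.1 hrIcc.1
  refine ⟨r, hr0, ?_⟩
  have hys : ((n:ℝ) - 2) * y = s ^ (-((n:ℝ) - 2)) := by
    rw [hy_def]; field_simp
  rw [Svar_eq, hFr, hys, ← Real.rpow_mul hs.le]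
  have h1 : (-((n:ℝ) - 2)) * (-(1 / ((n:ℝ) - 2))) = 1 := by
    field_simp
  rw [h1, Real.rpow_one]

/-- exponent `β = q (n-1)` -/
noncomputable def βv (n : ℕ) (q : ℝ) : ℝ := q * ((n:ℝ) - 1)

/-- constant in `F r ∼ C r^{1-β}` -/
noncomputable def Cv (n : ℕ) (q a : ℝ) : ℝ := a ^ (-((n:ℝ) - 1)) / (βv n q - 1)

lemma βv_gt_one (H : Hyp n ψ q a) : 1 < βv n q := qk_gt_one H

lemma Cv_pos (H : Hyp n ψ q a) : 0 < Cv n q a := by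
  have h1 := βv_gt_one H
  have h2 := Real.rpow_pos_of_pos H.ha (-((n:ℝ) - 1))
  exact div_pos h2 (by linarith)

lemma F_asymp (H : Hyp n ψ q a) :
    Tendsto (fun r => F n ψ r / (Cv n q a * r ^ (1 - βv n q))) atTop (nhds 1) := by
  have hβ := βv_gt_one H
  have hC := Cv_pos H
  have ha := H.ha
  set β := βv n q with hβ_def
  set C := Cv n q a with hC_def
  have hf' : ∀ᶠ r in atTop, HasDerivAt (F n ψ) (-(g n ψ r)) r := by
    filter_upwards [eventually_gt_atTop 0] with r hr
    exact F_hasDeriv H hr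
  have hg' : ∀ᶠ r in atTop, HasDerivAt (fun r => C * r ^ (1 - β))
      (C * ((1 - β) * r ^ (1 - β - 1))) r := by
    filter_upwards [eventually_gt_atTop 0] with r hr
    exact (Real.hasDerivAt_rpow_const (Or.inl hr.ne')).const_mul C
  have hg'ne : ∀ᶠ r in atTop, C * ((1 - β) * r ^ (1 - β - 1)) ≠ 0 := by
    filter_upwards [eventually_gt_atTop 0] with r hr
    have h1 : r ^ (1 - β - 1) ≠ 0 := (Real.rpow_pos_of_pos hr _).ne'
    have h2 : 1 - β ≠ 0 := by linarith
    positivity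
  have hG0 : Tendsto (fun r => C * r ^ (1 - β)) atTop (nhds 0) := by
    have h1 : Tendsto (fun r : ℝ => r ^ (-(β - 1))) atTop (nhds 0) :=
      tendsto_rpow_neg_atTop (by linarith)
    have h2 := h1.const_mul C
    rw [mul_zero] at h2
    apply h2.congr
    intro r
    norm_num
  have hdiv : Tendsto (fun r => (-(g n ψ r)) / (C * ((1 - β) * r ^ (1 - β - 1))))
      atTop (nhds 1) := by
    have hbase : Tendsto (fun r => (a * r ^ q / ψ r) ^ (n - 1)) atTop (nhds 1) := by
      have h1 := (H.hasymp.inv₀ one_ne_zero).pow (n - 1)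
      norm_num [inv_div] at h1
      exact h1
    apply hbase.congr'
    filter_upwards [eventually_gt_atTop 0] with r hr
    have hψr := H.hpos r hr
    have hψk : (0:ℝ) < ψ r ^ (n - 1) := pow_pos hψr _
    have hb : r ^ β = (r ^ q) ^ (n - 1) := by
      rw [← Real.rpow_natCast (r ^ q) (n - 1), ← Real.rpow_mul hr.le, k_cast H, hβ_def, βv]
    have ha' : (a ^ (-((n:ℝ) - 1)))⁻¹ = a ^ (n - 1 : ℕ) := by
      rw [← Real.rpow_natCast a (n - 1), k_cast H, ← Real.rpow_neg ha.le, neg_neg]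
    have hexp : (1:ℝ) - β - 1 = -β := by ring
    have hrβ : (0:ℝ) < r ^ β := Real.rpow_pos_of_pos hr β
    have hAne : a ^ (-((n:ℝ) - 1)) ≠ 0 := (Real.rpow_pos_of_pos ha _).ne'
    have hβ1 : β - 1 ≠ 0 := by linarith
    have key : ∀ X P Q : ℝ, X ≠ 0 → P ≠ 0 → Q ≠ 0 →
        X⁻¹ * P / Q = -(1 / Q) / (X / (β - 1) * ((1 - β) * P⁻¹)) := by
      intro X P Q hX hP hQ
      have hden : X / (β - 1) * ((1 - β) * P⁻¹) = -(X * P⁻¹) := by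
        field_simp
        ring
      rw [hden, neg_div_neg_eq]
      field_simp
    show (a * r ^ q / ψ r) ^ (n - 1) = -(g n ψ r) / (C * ((1 - β) * r ^ (1 - β - 1)))
    simp only [g]
    rw [hexp, Real.rpow_neg hr.le, div_pow, mul_pow, ← ha', ← hb, hC_def]
    simp only [Cv, ← hβ_def]
    exact key _ _ _ hAne hrβ.ne' hψk.ne'
  exact HasDerivAt.lhopital_zero_atTop hf' hg' hg'ne (F_tendsto_zero H) hG0 hdiv

noncomputable def αv (n : ℕ) (q : ℝ) : ℝ := (βv n q - 1) / ((n:ℝ) - 2)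

noncomputable def Kv (n : ℕ) (q a : ℝ) : ℝ :=
  (((n:ℝ) - 2) * Cv n q a) ^ (-(1 / ((n:ℝ) - 2)))

lemma αv_pos (H : Hyp n ψ q a) : 0 < αv n q := by
  have h1 := βv_gt_one H
  have h2 := N2_pos H
  exact div_pos (by linarith) h2

lemma Kv_pos (H : Hyp n ψ q a) : 0 < Kv n q a := by
  have h1 := Cv_pos H
  have h2 := N2_pos H
  exact Real.rpow_pos_of_pos (by positivity) _

lemma Svar_asymp (H : Hyp n ψ q a) :
    Tendsto (fun r => Svar n ψ r / (Kv n q a * r ^ αv n q)) atTop (nhds 1) := by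
  have hN2 := N2_pos H
  have hC := Cv_pos H
  have hK := Kv_pos H
  have hue := (F_asymp H).rpow_const
    (Or.inl one_ne_zero) (p := -(1 / ((n:ℝ) - 2)))
  rw [Real.one_rpow] at hue
  apply hue.congr'
  filter_upwards [eventually_gt_atTop 0] with r hr
  have hFr := F_pos H hr
  have hr1β : (0:ℝ) < r ^ (1 - βv n q) := Real.rpow_pos_of_pos hr _
  have hP : (0:ℝ) < Cv n q a * r ^ (1 - βv n q) := by positivity
  have hrα : (0:ℝ) < r ^ αv n q := Real.rpow_pos_of_pos hr _
  have h1 : ((n:ℝ) - 2) * F n ψ r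
      = (((n:ℝ) - 2) * Cv n q a * r ^ (1 - βv n q))
        * (F n ψ r / (Cv n q a * r ^ (1 - βv n q))) := by
    field_simp
  have h2 : Svar n ψ r = (Kv n q a * r ^ αv n q)
      * (F n ψ r / (Cv n q a * r ^ (1 - βv n q))) ^ (-(1 / ((n:ℝ) - 2))) := by
    rw [Svar_eq, h1, Real.mul_rpow (by positivity) (by positivity)]
    congr 1
    rw [Real.mul_rpow (by positivity) hr1β.le, ← Real.rpow_mul hr.le, Kv]
    congr 1
    rw [αv]
    field_simp
    congr 1
    ring
  rw [h2, mul_div_cancel_left₀ _ (by positivity : (Kv n q a * r ^ αv n q) ≠ 0)]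

lemma rpow_alg {aa r z w K c1 : ℝ} (ha : 0 < aa) (hr : 0 < r) (hz : 0 < z)
    (hw : 0 < w) (hK : 0 < K) (hc1 : 0 < c1) {E p qq α : ℝ}
    (hqE : qq * E = α * (E - p)) (hconst : c1 * K ^ (E - p) = aa ^ E) :
    ((aa * r ^ qq * z) ^ E / (K * r ^ α * w) ^ E) / (c1 * (K * r ^ α * w) ^ (-p))
      = z ^ E * w ^ (p - E) := by
  have hu : 0 < K * r ^ α * w := by positivity
  have hrq : 0 < r ^ qq := Real.rpow_pos_of_pos hr _
  have hrα : 0 < r ^ α := Real.rpow_pos_of_pos hr _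
  have h1 : ((aa * r ^ qq * z) ^ E / (K * r ^ α * w) ^ E) / (c1 * (K * r ^ α * w) ^ (-p))
      = (aa * r ^ qq * z) ^ E / (c1 * (K * r ^ α * w) ^ (E - p)) := by
    rw [div_div]
    congr 1
    rw [show E - p = E + (-p) by ring, Real.rpow_add hu]
    ring
  rw [h1]
  rw [Real.mul_rpow (by positivity) hz.le, Real.mul_rpow ha.le hrq.le,
    Real.mul_rpow (by positivity) hw.le, Real.mul_rpow hK.le hrα.le,
    ← Real.rpow_mul hr.le, ← Real.rpow_mul hr.le, ← hqE]
  have h2 : c1 * (K ^ (E - p) * r ^ (qq * E) * w ^ (E - p))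
      = aa ^ E * r ^ (qq * E) * w ^ (E - p) := by
    rw [← hconst]; ring
  rw [h2, show p - E = -(E - p) by ring, Real.rpow_neg hw.le]
  have hwEp : (0:ℝ) < w ^ (E - p) := Real.rpow_pos_of_pos hw _
  have haE : (0:ℝ) < aa ^ E := Real.rpow_pos_of_pos ha _
  have hrqE : (0:ℝ) < r ^ (qq * E) := Real.rpow_pos_of_pos hr _
  field_simp

end Stmt12



end Stmt12Aux


open Real Filter MeasureTheory Set in
set_option maxHeartbeats 1000000 in
/-- quasi-Euclidean models I, Section 7.3 of the paper. Let `n ≥ 3`,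
`q > 1`, `a > 0` and `ψ ∈ 𝒜` with `ψ(r) ∼ a r^q`. With
`p_q = 2(n-1)(q-1)/((n-1)q-1) ∈ (0,2)`, the tail integral is finite and
`r(s) ∼ c s^{(2-p_q)/2}`, `ρ(s) ∼ c₁ s^{-p_q}` as `s → +∞`, with the explicit
constants `c`, `c₁` of the paper. -/
theorem stmt_12
    (n : ℕ) (hn : 3 ≤ n) (q a : ℝ) (hq : 1 < q) (ha : 0 < a)
    (ψ : ℝ → ℝ) (hψA : classA ψ)
    (hψasymp : Filter.Tendsto (fun r => ψ r / (a * r ^ q)) Filter.atTop (nhds 1))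
    (p : ℝ) (hp : p = 2 * ((n : ℝ) - 1) * (q - 1) / (((n : ℝ) - 1) * q - 1))
    (c c₁ : ℝ)
    (hc : c = a ^ (-(((n : ℝ) - 1) / (((n : ℝ) - 1) * q - 1)))
        * (((n : ℝ) - 2) / (((n : ℝ) - 1) * q - 1)) ^ (1 / (((n : ℝ) - 1) * q - 1)))
    (hc₁ : c₁ = a ^ (2 * ((n : ℝ) - 1)) * c ^ (2 * ((n : ℝ) - 1) * q)) :
    (0 < p ∧ p < 2) ∧
    MeasureTheory.IntegrableOn (fun t => 1 / ψ t ^ (n - 1)) (Set.Ioi 1) ∧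
    ∃ rOf : ℝ → ℝ,
      (∀ r > (0 : ℝ), rOf (Svar n ψ r) = r) ∧
      (∀ s > (0 : ℝ), Svar n ψ (rOf s) = s) ∧
      Filter.Tendsto (fun s => rOf s / (c * s ^ ((2 - p) / 2)))
        Filter.atTop (nhds 1) ∧
      Filter.Tendsto (fun s =>
          (ψ (rOf s) ^ (2 * (n - 1)) / s ^ (2 * (n - 1))) / (c₁ * s ^ (-p)))
        Filter.atTop (nhds 1) := by
  classical
  have H : Stmt12.Hyp n ψ q a :=
    ⟨hn, hq, ha, hψA.2.2.2.2, hψA.1.continuousOn, hψasymp,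
      hψA.2.1, hψA.2.2.1, hψA.2.2.2.1⟩
  have hN3 : (3:ℝ) ≤ (n:ℝ) := by exact_mod_cast hn
  have hN2 := Stmt12.N2_pos H
  have hD : 0 < ((n:ℝ) - 1) * q - 1 := by nlinarith
  have hppos : 0 < p := by
    rw [hp]; exact div_pos (by nlinarith) hD
  have hplt : p < 2 := by
    rw [hp, div_lt_iff₀ hD]; nlinarith
  refine ⟨⟨hppos, hplt⟩, Stmt12.g_int H one_pos, ?_⟩
  -- the inverse function
  set rOf : ℝ → ℝ :=
    fun s => if h : ∃ r > 0, Svar n ψ r = s then h.choose else 1 with hrOf_def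
  have hleft : ∀ r > (0:ℝ), rOf (Svar n ψ r) = r := by
    intro r hr
    have hex : ∃ r' > 0, Svar n ψ r' = Svar n ψ r := ⟨r, hr, rfl⟩
    simp only [hrOf_def, dif_pos hex]
    exact (Stmt12.Svar_strictMono H).injOn
      (Set.mem_Ioi.2 hex.choose_spec.1) (Set.mem_Ioi.2 hr) hex.choose_spec.2
  have hrOf : ∀ s > (0:ℝ), 0 < rOf s ∧ Svar n ψ (rOf s) = s := by
    intro s hs
    have hex := Stmt12.Svar_surj H hs
    simp only [hrOf_def, dif_pos hex]
    exact ⟨hex.choose_spec.1, hex.choose_spec.2⟩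
  have htop : Filter.Tendsto rOf Filter.atTop Filter.atTop := by
    rw [Filter.tendsto_atTop]
    intro b
    have hR : (0:ℝ) < max b 1 := lt_of_lt_of_le one_pos (le_max_right _ _)
    filter_upwards [Filter.eventually_gt_atTop (max (Svar n ψ (max b 1)) 0)]
      with s hs
    have hs0 : 0 < s := lt_of_le_of_lt (le_max_right _ _) hs
    obtain ⟨h1, h2⟩ := hrOf s hs0
    by_contra hcon
    push_neg at hcon
    have hle : rOf s ≤ max b 1 := le_trans hcon.le (le_max_left _ _)
    have hmono := (Stmt12.Svar_strictMono H).monotoneOn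
      (Set.mem_Ioi.2 h1) (Set.mem_Ioi.2 hR) hle
    rw [h2] at hmono
    exact absurd (lt_of_le_of_lt (le_max_left _ _) hs) (not_lt.2 hmono)
  -- constants
  have hK := Stmt12.Kv_pos H
  have hβD : Stmt12.βv n q - 1 = ((n:ℝ) - 1) * q - 1 := by
    rw [Stmt12.βv]; ring
  have hγα : Stmt12.αv n q * ((2 - p) / 2) = 1 := by
    rw [Stmt12.αv, hβD, hp]
    field_simp
    ring
  have hsplit : ((n:ℝ) - 2) * Stmt12.Cv n q a
      = a ^ (-((n:ℝ) - 1)) * (((n:ℝ) - 2) / (((n:ℝ) - 1) * q - 1)) := by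
    rw [Stmt12.Cv, hβD]; ring
  have hXpos : 0 < ((n:ℝ) - 2) / (((n:ℝ) - 1) * q - 1) := div_pos hN2 hD
  have hCpos := Stmt12.Cv_pos H
  have hKγ : Stmt12.Kv n q a ^ ((2 - p) / 2)
      = a ^ (((n:ℝ) - 1) / (((n:ℝ) - 1) * q - 1))
        * (((n:ℝ) - 2) / (((n:ℝ) - 1) * q - 1)) ^ (-(1 / (((n:ℝ) - 1) * q - 1))) := by
    rw [Stmt12.Kv, ← Real.rpow_mul (by positivity), hsplit]
    have hexp : (-(1 / ((n:ℝ) - 2))) * ((2 - p) / 2) = -(1 / (((n:ℝ) - 1) * q - 1)) := by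
      rw [hp]
      field_simp
      ring
    rw [hexp, Real.mul_rpow (by positivity) hXpos.le, ← Real.rpow_mul ha.le]
    congr 2
    ring
  have hcK : c * Stmt12.Kv n q a ^ ((2 - p) / 2) = 1 := by
    rw [hc, hKγ, mul_mul_mul_comm, ← Real.rpow_add ha, ← Real.rpow_add hXpos]
    simp
  -- first asymptotic
  have hmain1 : Filter.Tendsto (fun r => r / (c * Svar n ψ r ^ ((2 - p) / 2)))
      Filter.atTop (nhds 1) := by
    have hv := Stmt12.Svar_asymp H
    have hvγ := (hv.rpow_const (Or.inl one_ne_zero) (p := (2 - p) / 2)).inv₀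
      (by rw [Real.one_rpow]; exact one_ne_zero)
    rw [Real.one_rpow, inv_one] at hvγ
    apply hvγ.congr'
    filter_upwards [Filter.eventually_gt_atTop 0] with r hr
    have hS := Stmt12.Svar_pos H hr
    have hrα : (0:ℝ) < r ^ Stmt12.αv n q := Real.rpow_pos_of_pos hr _
    set w := Svar n ψ r / (Stmt12.Kv n q a * r ^ Stmt12.αv n q) with hw_def
    have hwpos : 0 < w := div_pos hS (by positivity)
    have hS_eq : Svar n ψ r = Stmt12.Kv n q a * r ^ Stmt12.αv n q * w := by
      rw [hw_def]; field_simp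
    rw [hS_eq, Real.mul_rpow (by positivity) hwpos.le,
      Real.mul_rpow hK.le hrα.le, ← Real.rpow_mul hr.le, hγα, Real.rpow_one]
    have hcc : c * (Stmt12.Kv n q a ^ ((2 - p) / 2) * r * w ^ ((2 - p) / 2))
        = r * w ^ ((2 - p) / 2) := by
      rw [show c * (Stmt12.Kv n q a ^ ((2 - p) / 2) * r * w ^ ((2 - p) / 2))
          = c * Stmt12.Kv n q a ^ ((2 - p) / 2) * (r * w ^ ((2 - p) / 2)) by ring,
        hcK, one_mul]
    rw [hcc, div_mul_eq_div_div, div_self hr.ne', one_div]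
  have ht1 : Filter.Tendsto (fun s => rOf s / (c * s ^ ((2 - p) / 2)))
      Filter.atTop (nhds 1) := by
    have hcomp := hmain1.comp htop
    apply hcomp.congr'
    filter_upwards [Filter.eventually_gt_atTop 0] with s hs
    obtain ⟨h1, h2⟩ := hrOf s hs
    simp only [Function.comp]
    rw [h2]
  -- second asymptotic
  have hc_pos : 0 < c := by
    rw [hc]
    exact mul_pos (Real.rpow_pos_of_pos ha _) (Real.rpow_pos_of_pos hXpos _)
  have hc₁_pos : 0 < c₁ := by
    rw [hc₁]
    exact mul_pos (Real.rpow_pos_of_pos ha _) (Real.rpow_pos_of_pos hc_pos _)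
  have hKγc : Stmt12.Kv n q a ^ ((2 - p) / 2) = c⁻¹ :=
    eq_inv_of_mul_eq_one_right hcK
  have hEp : 2 * ((n:ℝ) - 1) - p = (2 - p) / 2 * (2 * ((n:ℝ) - 1) * q) := by
    rw [hp]
    field_simp
    ring
  have hconst : c₁ * Stmt12.Kv n q a ^ (2 * ((n:ℝ) - 1) - p)
      = a ^ (2 * ((n:ℝ) - 1)) := by
    rw [hEp, Real.rpow_mul hK.le, hKγc, hc₁, mul_assoc,
      ← Real.mul_rpow hc_pos.le (inv_nonneg.2 hc_pos.le),
      mul_inv_cancel₀ hc_pos.ne', Real.one_rpow, mul_one]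
  have hqE : q * (2 * ((n:ℝ) - 1)) = Stmt12.αv n q * (2 * ((n:ℝ) - 1) - p) := by
    rw [Stmt12.αv, hβD, hp]
    have hD' := hD.ne'
    have hN2' := hN2.ne'
    rw [sub_div' hD', div_mul_div_comm, eq_div_iff (mul_ne_zero hN2' hD')]
    ring
  have hglobal2 : Filter.Tendsto (fun r =>
      (ψ r ^ (2 * (n - 1)) / Svar n ψ r ^ (2 * (n - 1))) / (c₁ * Svar n ψ r ^ (-p)))
      Filter.atTop (nhds 1) := by
    have hv := Stmt12.Svar_asymp H
    have hzE := hψasymp.rpow_const (Or.inl one_ne_zero) (p := 2 * ((n:ℝ) - 1))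
    have hwPE := hv.rpow_const (Or.inl one_ne_zero) (p := p - 2 * ((n:ℝ) - 1))
    rw [Real.one_rpow] at hzE hwPE
    have hprod := hzE.mul hwPE
    rw [mul_one] at hprod
    apply hprod.congr'
    filter_upwards [Filter.eventually_gt_atTop 0] with r hr
    have hψpos := H.hpos r hr
    have hS := Stmt12.Svar_pos H hr
    have hrα : (0:ℝ) < r ^ Stmt12.αv n q := Real.rpow_pos_of_pos hr _
    have hrq : (0:ℝ) < r ^ q := Real.rpow_pos_of_pos hr _
    have hnp : ∀ x : ℝ, 0 < x → x ^ (2 * (n - 1)) = x ^ (2 * ((n:ℝ) - 1)) := by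
      intro x hx
      rw [← Real.rpow_natCast x (2 * (n - 1))]
      congr 1
      have h1n : (1:ℕ) ≤ n := by omega
      push_cast [h1n]
      ring
    set z := ψ r / (a * r ^ q) with hz_def
    set w := Svar n ψ r / (Stmt12.Kv n q a * r ^ Stmt12.αv n q) with hw_def
    have hzpos : 0 < z := div_pos hψpos (by positivity)
    have hwpos : 0 < w := div_pos hS (by positivity)
    have hψ_eq : ψ r = a * r ^ q * z := by rw [hz_def]; field_simp
    have hS_eq : Svar n ψ r = Stmt12.Kv n q a * r ^ Stmt12.αv n q * w := by
      rw [hw_def]; field_simp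
    rw [hnp _ hψpos, hnp _ hS, hψ_eq, hS_eq]
    exact (Stmt12.rpow_alg ha hr hzpos hwpos hK hc₁_pos hqE hconst).symm
  have ht2 : Filter.Tendsto (fun s =>
      (ψ (rOf s) ^ (2 * (n - 1)) / s ^ (2 * (n - 1))) / (c₁ * s ^ (-p)))
      Filter.atTop (nhds 1) := by
    have hcomp := hglobal2.comp htop
    apply hcomp.congr'
    filter_upwards [Filter.eventually_gt_atTop 0] with s hs
    obtain ⟨h1, h2⟩ := hrOf s hs
    simp only [Function.comp]
    rw [h2]
  exact ⟨rOf, hleft, fun s hs => (hrOf s hs).2, ht1, ht2⟩
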